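/- For every event A ⊆ Ω_n and every ε ∈ (0,1): (1/2) · VAR(A, ε) ≤ φ(A, ε) ≤ VAR(A, ε)^{1/3}. -/

import Mathlib

/-!
Write `f x = P(N_ε(x) ∈ A | x) − P(A)`. Since the noise preserves the uniform measure, `E f = 0`
and `VAR(A, ε) = E f²`, while `φ(A, ε)` is the infimum of the levels `δ > 0` with
`P(|f| > δ) < δ`. Chebyshev's inequality `δ² P(|f| > δ) ≤ E f²` makes every `δ > VAR^{1/3}`
admissible. Conversely `|f| ≤ 1`, so `E f² ≤ P(|f| > δ) + δ² < δ + δ² ≤ 2δ` for an admissible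
`δ ≤ 1`, and `VAR ≤ 1` handles `δ > 1`.
-/

namespace BKS

open Finset Filter

variable {ι : Type} [Fintype ι] [DecidableEq ι]

/-- Probability of an event under the uniform measure on `ι → Bool`. -/
noncomputable def cprob (A : Finset (ι → Bool)) : ℝ :=
  (A.card : ℝ) / 2 ^ Fintype.card ι

/-- Expectation of a function under the uniform measure on `ι → Bool`. -/
noncomputable def cexpect (f : (ι → Bool) → ℝ) : ℝ :=
  (∑ x : ι → Bool, f x) / 2 ^ Fintype.card ι

/-- Real-valued indicator of an event. -/
noncomputable def indE (A : Finset (ι → Bool)) : (ι → Bool) → ℝ :=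
  fun x => if x ∈ A then 1 else 0

/-- Transition kernel of the ε-noise: probability that `N_ε(x) = y`. -/
noncomputable def noiseKernel (ε : ℝ) (x y : ι → Bool) : ℝ :=
  ∏ j : ι, if y j = x j then 1 - ε else ε

/-- `P(N_ε(x) ∈ A | x)`. -/
noncomputable def condProb (ε : ℝ) (A : Finset (ι → Bool)) (x : ι → Bool) : ℝ :=
  ∑ y ∈ A, noiseKernel ε x y

/-- Sensitivity gauge φ(A, ε) = inf{δ > 0 : P{x : |P(N_ε(x) ∈ A | x) − P(A)| > δ} < δ}. -/
noncomputable def gauge (ε : ℝ) (A : Finset (ι → Bool)) : ℝ :=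
  sInf {δ : ℝ | 0 < δ ∧
    cprob (@Finset.filter _ (fun x => δ < |condProb ε A x - cprob A|)
      (Classical.decPred _) Finset.univ) < δ}

/-- Flip the `k`-th bit. -/
def flipBit (k : ι) (x : ι → Bool) : ι → Bool := Function.update x k (!x k)

/-- Influence of the `k`-th variable: `I_k(f) = E|f(σ_k x) − f(x)|`. -/
noncomputable def influence (k : ι) (f : (ι → Bool) → ℝ) : ℝ :=
  cexpect fun x => |f (flipBit k x) - f x|

/-- `I(f) = Σ_k I_k(f)`. -/
noncomputable def totalInf (f : (ι → Bool) → ℝ) : ℝ := ∑ k : ι, influence k f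

/-- `II(f) = Σ_k I_k(f)²`. -/
noncomputable def sqInf (f : (ι → Bool) → ℝ) : ℝ := ∑ k : ι, (influence k f) ^ 2

/-- `II(A)` for an event `A`. -/
noncomputable def sqInfE (A : Finset (ι → Bool)) : ℝ := sqInf (indE A)

/-- A monotone (upward closed) event. -/
def MonotoneEvent (A : Finset (ι → Bool)) : Prop :=
  ∀ x y : ι → Bool, (∀ j, x j ≤ y j) → x ∈ A → y ∈ A

/-- Fourier–Walsh coefficient `f̂(S) = E[f · u_S]`, where `u_S(x) = (−1)^{|S ∩ x|}`. -/
noncomputable def walshFourier (f : (ι → Bool) → ℝ) (S : Finset ι) : ℝ :=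
  cexpect fun x => f x * (-1 : ℝ) ^ (S.filter fun j => x j = true).card

/-- `Q_ε f (x) = E[f(N_ε(x))]`. -/
noncomputable def Qop (ε : ℝ) (f : (ι → Bool) → ℝ) (x : ι → Bool) : ℝ :=
  ∑ y : ι → Bool, noiseKernel ε x y * f y

/-- `VAR(f, ε)`: variance of `x ↦ E[f(N_ε(x)) | x]`. -/
noncomputable def VAR (ε : ℝ) (f : (ι → Bool) → ℝ) : ℝ :=
  cexpect fun x => (Qop ε f x - cexpect (Qop ε f)) ^ 2

/-- `P[A △ N_ε A]`. -/
noncomputable def probSymmDiff (ε : ℝ) (A : Finset (ι → Bool)) : ℝ :=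
  cexpect fun x => ∑ y : ι → Bool, noiseKernel ε x y *
    (if (x ∈ A) ↔ (y ∈ A) then 0 else 1)

/-- `P[A \ N_ε A]`. -/
noncomputable def probOffDiff (ε : ℝ) (A : Finset (ι → Bool)) : ℝ :=
  cexpect fun x => ∑ y : ι → Bool, noiseKernel ε x y *
    (if x ∈ A ∧ y ∉ A then 1 else 0)

/-- Majority function on the set `K`: `M_K(x) = sign(Σ_{j∈K}(2x_j − 1))`. -/
noncomputable def majority (K : Finset ι) (x : ι → Bool) : ℝ :=
  Real.sign (∑ j ∈ K, (2 * (if x j then (1:ℝ) else 0) - 1))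

/-- Weighted majority function `M_w(x) = sign(Σ_j (2x_j − 1) w_j)`. -/
noncomputable def wMajority (w : ι → ℝ) (x : ι → Bool) : ℝ :=
  Real.sign (∑ j : ι, (2 * (if x j then (1:ℝ) else 0) - 1) * w j)

/-- The discrete cube Ω_n = {0,1}^n. -/
abbrev Cube (n : ℕ) := Fin n → Bool

end BKS

namespace BKS

open Finset

section Threshold

variable {p : ℝ → ℝ} {V : ℝ}

lemma mem_threshold_of_sq_mul_le (hV : 0 ≤ V) (hp : ∀ δ > 0, δ ^ 2 * p δ ≤ V) {δ : ℝ}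
    (hδ : V ^ ((1 : ℝ) / 3) < δ) : δ ∈ {δ : ℝ | 0 < δ ∧ p δ < δ} := by
  have hcube : (V ^ ((1 : ℝ) / 3)) ^ 3 = V := by
    rw [← Real.rpow_natCast, ← Real.rpow_mul hV]; norm_num
  have hδ0 : 0 < δ := (Real.rpow_nonneg hV _).trans_lt hδ
  have hVδ : V < δ ^ 3 := hcube ▸ pow_lt_pow_left₀ hδ (Real.rpow_nonneg hV _) three_ne_zero
  refine ⟨hδ0, lt_of_mul_lt_mul_left ?_ (sq_nonneg δ)⟩
  calc δ ^ 2 * p δ ≤ V := hp δ hδ0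
    _ < δ ^ 2 * δ := by rw [← pow_succ]; exact hVδ

lemma sInf_threshold_le_rpow (hV : 0 ≤ V) (hp : ∀ δ > 0, δ ^ 2 * p δ ≤ V) :
    sInf {δ : ℝ | 0 < δ ∧ p δ < δ} ≤ V ^ ((1 : ℝ) / 3) :=
  calc sInf {δ : ℝ | 0 < δ ∧ p δ < δ} ≤ sInf (Set.Ioi (V ^ ((1 : ℝ) / 3))) :=
        csInf_le_csInf ⟨0, fun _ hδ => hδ.1.le⟩ Set.nonempty_Ioi
          fun _ hδ => mem_threshold_of_sq_mul_le hV hp hδ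
    _ = V ^ ((1 : ℝ) / 3) := csInf_Ioi

lemma half_le_sInf_threshold (hV : 0 ≤ V) (hV1 : V ≤ 1) (hp : ∀ δ > 0, δ ^ 2 * p δ ≤ V)
    (hp' : ∀ δ > 0, V ≤ p δ + δ ^ 2) : V / 2 ≤ sInf {δ : ℝ | 0 < δ ∧ p δ < δ} := by
  refine le_csInf ⟨_, mem_threshold_of_sq_mul_le hV hp (lt_add_one _)⟩ ?_
  rintro δ ⟨hδ0, hpδ⟩
  rcases le_or_gt δ 1 with hδ1 | hδ1
  · nlinarith [hp' δ hδ0]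
  · linarith

end Threshold

variable {ι : Type} [Fintype ι]

lemma noiseKernel_nonneg {ε : ℝ} (hε0 : 0 ≤ ε) (hε1 : ε ≤ 1) (x y : ι → Bool) :
    0 ≤ noiseKernel ε x y :=
  prod_nonneg fun _ _ => by split <;> linarith

lemma noiseKernel_comm (ε : ℝ) (x y : ι → Bool) : noiseKernel ε x y = noiseKernel ε y x :=
  prod_congr rfl fun _ _ => by simp [eq_comm]

lemma cprob_nonneg (A : Finset (ι → Bool)) : 0 ≤ cprob A := by
  unfold cprob; positivity

variable [DecidableEq ι]

lemma sum_noiseKernel (ε : ℝ) (x : ι → Bool) : ∑ y, noiseKernel ε x y = 1 := by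
  unfold noiseKernel
  rw [← Fintype.piFinset_univ,
    ← prod_univ_sum (fun _ => univ) fun j b => if b = x j then 1 - ε else ε]
  refine prod_eq_one fun j _ => ?_
  cases x j <;> simp

lemma condProb_mem_Icc {ε : ℝ} (hε0 : 0 ≤ ε) (hε1 : ε ≤ 1) (A : Finset (ι → Bool))
    (x : ι → Bool) : condProb ε A x ∈ Set.Icc 0 1 :=
  ⟨sum_nonneg fun y _ => noiseKernel_nonneg hε0 hε1 x y,
    sum_noiseKernel ε x ▸ sum_le_sum_of_subset_of_nonneg (subset_univ A)
      fun y _ _ => noiseKernel_nonneg hε0 hε1 x y⟩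

lemma cexpect_mono {f g : (ι → Bool) → ℝ} (h : ∀ x, f x ≤ g x) : cexpect f ≤ cexpect g :=
  div_le_div_of_nonneg_right (sum_le_sum fun x _ => h x) (by positivity)

lemma cexpect_const_mul (c : ℝ) (f : (ι → Bool) → ℝ) :
    cexpect (fun x => c * f x) = c * cexpect f := by
  simp only [cexpect, ← mul_sum, mul_div_assoc]

lemma cexpect_add_const (f : (ι → Bool) → ℝ) (c : ℝ) :
    cexpect (fun x => f x + c) = cexpect f + c := by
  simp [cexpect, sum_add_distrib, add_div]

lemma cexpect_indE (A : Finset (ι → Bool)) : cexpect (indE A) = cprob A := by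
  simp [cexpect, cprob, indE, sum_ite_mem]

lemma cprob_le_one (A : Finset (ι → Bool)) : cprob A ≤ 1 := by
  rw [cprob, div_le_one (by positivity)]
  exact_mod_cast (card_le_univ A).trans_eq (by simp)

lemma sq_mul_cprob_le_cexpect_sq {f : (ι → Bool) → ℝ} {s : Finset (ι → Bool)} {δ : ℝ}
    (hδ : 0 ≤ δ) (hs : ∀ x ∈ s, δ ≤ |f x|) : δ ^ 2 * cprob s ≤ cexpect fun x => f x ^ 2 := by
  rw [← cexpect_indE, ← cexpect_const_mul]
  refine cexpect_mono fun x => ?_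
  unfold indE
  split_ifs with hx
  · simpa [sq_abs] using pow_le_pow_left₀ hδ (hs x hx) 2
  · simpa using sq_nonneg (f x)

lemma cexpect_sq_le_cprob_add_sq {f : (ι → Bool) → ℝ} {s : Finset (ι → Bool)} {δ : ℝ}
    (hf : ∀ x, |f x| ≤ 1) (hs : ∀ x ∉ s, |f x| ≤ δ) :
    (cexpect fun x => f x ^ 2) ≤ cprob s + δ ^ 2 := by
  rw [← cexpect_indE, ← cexpect_add_const]
  refine cexpect_mono fun x => ?_
  have hsq : f x ^ 2 ≤ 1 := sq_le_one_iff_abs_le_one _ |>.2 (hf x)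
  unfold indE
  split_ifs with hx
  · nlinarith
  · simpa [sq_abs] using pow_le_pow_left₀ (abs_nonneg _) (hs x hx) 2

lemma cexpect_sq_le_one {f : (ι → Bool) → ℝ} (hf : ∀ x, |f x| ≤ 1) :
    (cexpect fun x => f x ^ 2) ≤ 1 := by
  simpa [cprob, Fintype.card_fun] using
    cexpect_sq_le_cprob_add_sq (s := univ) (δ := 0) hf (by simp)

lemma cexpect_Qop (ε : ℝ) (f : (ι → Bool) → ℝ) : cexpect (Qop ε f) = cexpect f := by
  unfold cexpect Qop
  rw [sum_comm]
  simp only [← sum_mul, noiseKernel_comm ε _ _, sum_noiseKernel, one_mul]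

lemma Qop_indE (ε : ℝ) (A : Finset (ι → Bool)) : Qop ε (indE A) = condProb ε A := by
  ext x
  simp [Qop, indE, condProb, sum_ite_mem]

lemma VAR_nonneg (ε : ℝ) (f : (ι → Bool) → ℝ) : 0 ≤ VAR ε f := by
  unfold VAR cexpect; positivity

lemma VAR_indE (ε : ℝ) (A : Finset (ι → Bool)) :
    VAR ε (indE A) = cexpect fun x => (condProb ε A x - cprob A) ^ 2 := by
  rw [VAR, cexpect_Qop, cexpect_indE, Qop_indE]

/-- (1/2) VAR(A, ε) ≤ φ(A, ε) ≤ VAR(A, ε)^{1/3}. -/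
theorem var_le_gauge_le_var (n : ℕ) (A : Finset (Cube n))
    (ε : ℝ) (hε0 : 0 < ε) (hε1 : ε < 1) :
    VAR ε (indE A) / 2 ≤ gauge ε A ∧
      gauge ε A ≤ (VAR ε (indE A)) ^ ((1:ℝ)/3) := by
  set f := fun x => condProb ε A x - cprob A
  set bad := fun δ : ℝ => @Finset.filter _ (fun x => δ < |f x|) (Classical.decPred _) univ
  have hf : ∀ x, |f x| ≤ 1 := fun x =>
    have hx := condProb_mem_Icc hε0.le hε1.le A x
    abs_sub_le_of_nonneg_of_le hx.1 hx.2 (cprob_nonneg A) (cprob_le_one A)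
  have hV0 : 0 ≤ VAR ε (indE A) := VAR_nonneg ε (indE A)
  have hcheb : ∀ δ > 0, δ ^ 2 * cprob (bad δ) ≤ VAR ε (indE A) := fun δ hδ => by
    rw [VAR_indE]
    exact sq_mul_cprob_le_cexpect_sq hδ.le fun x hx => (mem_filter.1 hx).2.le
  have hbound : ∀ δ > 0, VAR ε (indE A) ≤ cprob (bad δ) + δ ^ 2 := fun δ _ => by
    rw [VAR_indE]
    exact cexpect_sq_le_cprob_add_sq hf fun x hx => not_lt.1 fun h => hx (mem_filter.2 ⟨mem_univ x, h⟩)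
  exact ⟨half_le_sInf_threshold hV0 (VAR_indE ε A ▸ cexpect_sq_le_one hf) hcheb hbound,
    sInf_threshold_le_rpow hV0 hcheb⟩

end BKS
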